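/- Let Λ be a locally convex row-finite k-graph and H a saturated hereditary subset of Λ^0. Then Γ(Λ∖H) := (Λ^0∖H, {λ∈Λ : s(λ)∉H}, r, s) with the restricted degree map is itself a locally convex row-finite k-graph; in particular the factorisation property holds: if λ∈Γ and d(λ)=p+q, the unique factors μ,ν∈Λ with λ=μν, d(μ)=p, d(ν)=q both lie in Γ. -/

import Mathlib

open scoped ENNReal

/-- A `k`-graph: a countable category `Λ` together with a degree functor
`d : Λ → ℕ^k` satisfying the unique factorisation property. -/
structure KGraph (k : ℕ) where
  Obj : Type
  Path : Type
  countable_path : Countable Path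
  r : Path → Obj
  s : Path → Obj
  ι : Obj → Path
  comp : (μ ν : Path) → s μ = r ν → Path
  d : Path → (Fin k → ℕ)
  r_ι : ∀ v, r (ι v) = v
  s_ι : ∀ v, s (ι v) = v
  d_ι : ∀ v, d (ι v) = 0
  r_comp : ∀ μ ν h, r (comp μ ν h) = r μ
  s_comp : ∀ μ ν h, s (comp μ ν h) = s ν
  d_comp : ∀ μ ν h, d (comp μ ν h) = d μ + d ν
  comp_ι_left : ∀ μ (h : s (ι (r μ)) = r μ), comp (ι (r μ)) μ h = μ
  comp_ι_right : ∀ μ (h : s μ = r (ι (s μ))), comp μ (ι (s μ)) h = μ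
  comp_assoc : ∀ μ ν ξ (h1 : s μ = r ν) (h2 : s ν = r ξ)
      (h3 : s (comp μ ν h1) = r ξ) (h4 : s μ = r (comp ν ξ h2)),
      comp (comp μ ν h1) ξ h3 = comp μ (comp ν ξ h2) h4
  factor : ∀ lam (m n : Fin k → ℕ), d lam = m + n →
      ∃! p : Path × Path, ∃ h : s p.1 = r p.2,
        comp p.1 p.2 h = lam ∧ d p.1 = m ∧ d p.2 = n

namespace KGraph

/-- The standard generator `e_i` of `ℕ^k`. -/
def e (k : ℕ) (i : Fin k) : Fin k → ℕ := Pi.single i 1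

variable {k : ℕ} (Λ : KGraph k)

/-- `Λ^m`, the paths of degree `m`. -/
def degSet (m : Fin k → ℕ) : Set Λ.Path := {lam | Λ.d lam = m}

/-- `Λ^m(v)`, the paths of degree `m` with range `v`. -/
def degAt (m : Fin k → ℕ) (v : Λ.Obj) : Set Λ.Path :=
  {lam | Λ.d lam = m ∧ Λ.r lam = v}

/-- `Λ^{≤ q}`: paths `λ` with `d λ ≤ q` which cannot be extended within degree `q`. -/
def le (q : Fin k → ℕ) : Set Λ.Path :=
  {lam | Λ.d lam ≤ q ∧
    ∀ i : Fin k, Λ.d lam + e k i ≤ q → Λ.degAt (e k i) (Λ.s lam) = ∅}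

/-- `Λ^{≤ q}(v)`. -/
def leAt (q : Fin k → ℕ) (v : Λ.Obj) : Set Λ.Path :=
  {lam | lam ∈ Λ.le q ∧ Λ.r lam = v}

/-- Row-finiteness: each `Λ^m(v)` is finite. -/
def RowFinite : Prop := ∀ (v : Λ.Obj) (m : Fin k → ℕ), (Λ.degAt m v).Finite

/-- No sources: each `Λ^m(v)` is nonempty. -/
def NoSources : Prop := ∀ (v : Λ.Obj) (m : Fin k → ℕ), (Λ.degAt m v).Nonempty

/-- Local convexity. -/
def LocallyConvex : Prop :=
  ∀ (v : Λ.Obj) (i j : Fin k), i ≠ j →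
    ∀ lam μ, lam ∈ Λ.degAt (e k i) v → μ ∈ Λ.degAt (e k j) v →
      (Λ.degAt (e k j) (Λ.s lam)).Nonempty ∧ (Λ.degAt (e k i) (Λ.s μ)).Nonempty

section CK

variable {A : Type} [Ring A] [StarRing A]

/-- Cuntz-Krieger relations (1)-(3). -/
structure IsCK13 (S : Λ.Path → A) : Prop where
  proj : ∀ v, S (Λ.ι v) * S (Λ.ι v) = S (Λ.ι v)
  selfadj : ∀ v, star (S (Λ.ι v)) = S (Λ.ι v)
  orth : ∀ v w, v ≠ w → S (Λ.ι v) * S (Λ.ι w) = 0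
  mul : ∀ μ ν (h : Λ.s μ = Λ.r ν), S (Λ.comp μ ν h) = S μ * S ν
  src : ∀ lam, star (S lam) * S lam = S (Λ.ι (Λ.s lam))

/-- A Cuntz-Krieger `Λ`-family: relations (1)-(4). -/
structure IsCKFamily (S : Λ.Path → A) extends IsCK13 Λ S : Prop where
  sum : ∀ (v : Λ.Obj) (m : Fin k → ℕ),
    S (Λ.ι v) = ∑ᶠ lam ∈ Λ.leAt m v, S lam * star (S lam)

end CK

/-- Hereditary subsets of `Λ^0`. -/
def Hereditary (H : Set Λ.Obj) : Prop :=
  ∀ lam : Λ.Path, Λ.r lam ∈ H → Λ.s lam ∈ H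

/-- The operator `Σ` used in the inductive construction of the saturation. -/
def Sig (F : Set Λ.Obj) : Set Λ.Obj :=
  ⋃ i : Fin k, {v | ∀ lam ∈ Λ.leAt (e k i) v, Λ.s lam ∈ F}

/-- Saturated subsets of `Λ^0`. -/
def Saturated (H : Set Λ.Obj) : Prop :=
  ∀ (v : Λ.Obj) (i : Fin k), (∀ lam ∈ Λ.leAt (e k i) v, Λ.s lam ∈ H) → v ∈ H

/-- The saturation: smallest saturated set containing `H`. -/
def saturation (H : Set Λ.Obj) : Set Λ.Obj :=
  ⋂₀ {S | Λ.Saturated S ∧ H ⊆ S}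

end KGraph

/-- A boundary path: a degree-preserving graph morphism `x : Ω_{k,m} → Λ`
for some `m ∈ (ℕ ∪ {∞})^k`, such that whenever `p + e_i ≰ m`, the vertex `x(p)`
receives no edges of degree `e_i`. -/
structure BPath {k : ℕ} (Λ : KGraph k) where
  deg : Fin k → ℕ∞
  toFun : ∀ p q : Fin k → ℕ, p ≤ q → (∀ i, (q i : ℕ∞) ≤ deg i) → Λ.Path
  d_toFun : ∀ p q h1 h2, Λ.d (toFun p q h1 h2) = q - p
  comp_toFun : ∀ p q r (hpq : p ≤ q) (hqr : q ≤ r) (hpr : p ≤ r)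
      (hr : ∀ i, (r i : ℕ∞) ≤ deg i) (hq : ∀ i, (q i : ℕ∞) ≤ deg i),
    ∃ hc : Λ.s (toFun p q hpq hq) = Λ.r (toFun q r hqr hr),
      Λ.comp _ _ hc = toFun p r hpr hr
  bdry : ∀ (p : Fin k → ℕ) (hp : ∀ i, (p i : ℕ∞) ≤ deg i) (i : Fin k),
    ¬ ((p i : ℕ∞) + 1 ≤ deg i) →
    Λ.degAt (KGraph.e k i) (Λ.r (toFun p p le_rfl hp)) = ∅

namespace BPath

variable {k : ℕ} {Λ : KGraph k}

/-- The range of a boundary path. -/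
def r (x : BPath Λ) : Λ.Obj :=
  Λ.r (x.toFun 0 0 le_rfl (fun i => by simp))

end BPath

/-- An infinite path: a graph morphism `x : Ω_k → Λ`. -/
structure InfPath {k : ℕ} (Λ : KGraph k) where
  toFun : ∀ p q : Fin k → ℕ, p ≤ q → Λ.Path
  d_toFun : ∀ p q h, Λ.d (toFun p q h) = q - p
  comp_toFun : ∀ p q r (hpq : p ≤ q) (hqr : q ≤ r) (hpr : p ≤ r),
    ∃ hc : Λ.s (toFun p q hpq) = Λ.r (toFun q r hqr),
      Λ.comp _ _ hc = toFun p r hpr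

namespace InfPath

variable {k : ℕ} {Λ : KGraph k}

/-- The range of an infinite path. -/
def r (x : InfPath Λ) : Λ.Obj := Λ.r (x.toFun 0 0 le_rfl)

/-- The shift `σ^p`. -/
def shift (p : Fin k → ℕ) (x : InfPath Λ) : InfPath Λ where
  toFun a b h := x.toFun (a + p) (b + p) (add_le_add_left h p)
  d_toFun a b h := by
    rw [x.d_toFun]
    funext i
    simp only [Pi.sub_apply, Pi.add_apply]
    omega
  comp_toFun a b c hab hbc hac :=
    x.comp_toFun (a + p) (b + p) (c + p) (add_le_add_left hab p)
      (add_le_add_left hbc p) (add_le_add_left hac p)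

end InfPath

/-! If `Λ^{e_j}(w)` is nonempty, then `Λ^{≤ e_j}(w) = Λ^{e_j}(w)`; so when `w ∉ H`, saturation of
`H` forces some edge in `Λ^{e_j}(w)` to have source outside `H`. This gives local convexity of
`Γ(Λ∖H)`; the remaining properties follow from `H` being hereditary and from
`s (μ ν) = s ν`, `s μ = r ν`. -/

namespace KGraph

variable {k : ℕ} {Λ : KGraph k}

lemma eq_zero_or_eq_e_of_le_e {m : Fin k → ℕ} {j : Fin k} (h : m ≤ e k j) :
    m = 0 ∨ m = e k j := by
  have hoff : ∀ i, i ≠ j → m i = 0 := fun i hi => by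
    simpa [e, Pi.single_apply, hi] using h i
  have hm : m = Pi.single j (m j) := by
    funext i
    by_cases hi : i = j
    · subst hi; simp
    · simp [hi, hoff i hi]
  have hj : m j ≤ 1 := by simpa [e] using h j
  rcases Nat.le_one_iff_eq_zero_or_eq_one.mp hj with h0 | h1
  · exact Or.inl (by rw [hm, h0, Pi.single_zero])
  · exact Or.inr (by rw [hm, h1, e])

lemma eq_ι_r_of_d_eq_zero {lam : Λ.Path} (h : Λ.d lam = 0) : lam = Λ.ι (Λ.r lam) := by
  obtain ⟨p, -, huniq⟩ := Λ.factor lam 0 0 (by rw [h, add_zero])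
  have hleft : (Λ.ι (Λ.r lam), lam) = p :=
    huniq _ ⟨Λ.s_ι _, Λ.comp_ι_left lam _, Λ.d_ι _, h⟩
  have hright : (lam, Λ.ι (Λ.s lam)) = p :=
    huniq _ ⟨(Λ.r_ι _).symm, Λ.comp_ι_right lam _, h, Λ.d_ι _⟩
  exact congrArg Prod.fst (hright.trans hleft.symm)

lemma leAt_e_subset_degAt {v : Λ.Obj} {j : Fin k} (hne : (Λ.degAt (e k j) v).Nonempty) :
    Λ.leAt (e k j) v ⊆ Λ.degAt (e k j) v := by
  rintro lam ⟨⟨hle, hmax⟩, hr⟩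
  refine ⟨(eq_zero_or_eq_e_of_le_e hle).resolve_left fun hzero => ?_, hr⟩
  have hs : Λ.s lam = v := by rw [eq_ι_r_of_d_eq_zero hzero, Λ.s_ι, hr]
  have hempty := hmax j (by rw [hzero, zero_add])
  rw [hs] at hempty
  exact hne.ne_empty hempty

lemma Hereditary.r_notMem {H : Set Λ.Obj} (hher : Λ.Hereditary H) {lam : Λ.Path}
    (hs : Λ.s lam ∉ H) : Λ.r lam ∉ H :=
  fun hr => hs (hher lam hr)

lemma Saturated.exists_mem_degAt_s_notMem {H : Set Λ.Obj} (hsat : Λ.Saturated H)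
    {v : Λ.Obj} (hv : v ∉ H) {j : Fin k} (hne : (Λ.degAt (e k j) v).Nonempty) :
    ∃ α ∈ Λ.degAt (e k j) v, Λ.s α ∉ H := by
  by_contra! hall
  exact hv (hsat v j fun lam hlam => hall lam (leAt_e_subset_degAt hne hlam))

end KGraph

/-- for `H` saturated and hereditary, `Γ(Λ∖H)` (paths with
source outside `H`) is a locally convex row-finite `k`-graph: paths in `Γ` have
range outside `H`, `Γ` is closed under the factorisation of `Λ`, is row-finite,
and is locally convex. -/
theorem stmt17 {k : ℕ} (Λ : KGraph k) (hlc : Λ.LocallyConvex) (hrf : Λ.RowFinite)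
    (H : Set Λ.Obj) (hher : Λ.Hereditary H) (hsat : Λ.Saturated H) :
    (∀ lam : Λ.Path, Λ.s lam ∉ H → Λ.r lam ∉ H) ∧
    (∀ lam : Λ.Path, Λ.s lam ∉ H → ∀ (p q : Fin k → ℕ), Λ.d lam = p + q →
      ∀ (μ ν : Λ.Path) (hc : Λ.s μ = Λ.r ν), Λ.comp μ ν hc = lam →
        Λ.d μ = p → Λ.d ν = q → Λ.s μ ∉ H ∧ Λ.s ν ∉ H) ∧
    (∀ (v : Λ.Obj) (m : Fin k → ℕ), v ∉ H →
      {lam | lam ∈ Λ.degAt m v ∧ Λ.s lam ∉ H}.Finite) ∧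
    (∀ v : Λ.Obj, v ∉ H → ∀ (i j : Fin k), i ≠ j →
      ∀ lam μ, lam ∈ Λ.degAt (KGraph.e k i) v → Λ.s lam ∉ H →
        μ ∈ Λ.degAt (KGraph.e k j) v → Λ.s μ ∉ H →
        (∃ α ∈ Λ.degAt (KGraph.e k j) (Λ.s lam), Λ.s α ∉ H) ∧
        (∃ β ∈ Λ.degAt (KGraph.e k i) (Λ.s μ), Λ.s β ∉ H)) := by
  refine ⟨fun lam => hher.r_notMem, ?_, ?_, ?_⟩
  · rintro lam hs - - - μ ν hc rfl - -
    have hν : Λ.s ν ∉ H := by rwa [Λ.s_comp] at hs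
    exact ⟨hc ▸ hher.r_notMem hν, hν⟩
  · exact fun v m _ => (hrf v m).subset fun lam hlam => hlam.1
  · intro v _ i j hij lam μ hlam hsl hμ hsμ
    obtain ⟨hj, hi⟩ := hlc v i j hij lam μ hlam hμ
    exact ⟨hsat.exists_mem_degAt_s_notMem hsl hj, hsat.exists_mem_degAt_s_notMem hsμ hi⟩
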